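/- arXiv:2111.03684 — 3 statements merged into one kernel-verified Lean document; each statement's English description precedes it below -/
import Mathlib

section
/- Let k be a field, R a finite-dimensional semisimple k-algebra, V a simple finite-dimensional (left) R-module, and n₁ ≤ n₂ ≤ n₃ positive integers. Let U = { v ∈ V^{⊕n₃} : R·v ≅ V^{⊕n₁} } and C(n₂,n₃) = { C ⊆ V^{⊕n₃} : C is an R-submodule isomorphic to V^{⊕n₂} }. Then for each u ∈ U there is a bijection between { C ∈ C(n₂,n₃) : u ∈ C } and C(n₂−n₁, n₃−n₁). -/
/-!
Everything is measured by composition length. A submodule of `V^n` is semisimple with all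
simple submodules isomorphic to `V`, so it is isomorphic to `V^m` exactly when its length is `m`.
Projecting `V^{n₃}` onto a complement of `W = R·u` gives a surjection `f` onto a copy of
`V^{n₃-n₁}` with kernel `W`; then `C ↦ f(C)` matches the submodules containing `u` with all
submodules of the target, and `length C = n₁ + length f(C)`.
-/

open Module LinearMap

theorem ENat.natCast_add_eq_natCast_iff {a b : ℕ} {x : ℕ∞} :
    (a : ℕ∞) + x = b ↔ a ≤ b ∧ x = ↑(b - a) := by
  induction x using ENat.recTopCoe with
  | top => simp only [add_top, ENat.top_ne_natCast, and_false]
  | coe x => norm_cast; omega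

section

variable {R : Type*} [Ring R] {V : Type*} [AddCommGroup V] [Module R V]
  {M N : Type*} [AddCommGroup M] [Module R M] [AddCommGroup N] [Module R N]

theorem Module.length_eq_length_ker_add_length_map (f : M →ₗ[R] N) {C : Submodule R M}
    (hC : ker f ≤ C) : length R C = length R (ker f) + length R (C.map f) :=
  length_eq_add_of_exact (Submodule.inclusion hC) (f.submoduleMap C)
    (Submodule.inclusion_injective hC) (f.submoduleMap_surjective C) fun x => by
      simp [Subtype.ext_iff]

variable [IsSimpleModule R V]

theorem isIsotypicOfType_pi (ι : Type*) : IsIsotypicOfType R (ι → V) V := by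
  intro S _
  have := IsSimpleModule.nontrivial R S
  obtain ⟨x, hx⟩ := exists_ne (0 : S)
  obtain ⟨i, hi⟩ := Function.ne_iff.mp (Subtype.coe_ne_coe.mpr hx)
  have hS : proj i ∘ₗ S.subtype ≠ 0 := fun h => hi (congr($h x))
  exact ⟨.ofBijective _ (bijective_of_ne_zero hS)⟩

theorem Module.length_fin_pi (n : ℕ) : length R (Fin n → V) = n := by
  simp

theorem IsIsotypicOfType.nonempty_linearEquiv_fin_pi_iff [IsSemisimpleModule R M]
    [Module.Finite R M] (h : IsIsotypicOfType R M V) (m : ℕ) :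
    Nonempty (M ≃ₗ[R] (Fin m → V)) ↔ length R M = m := by
  refine ⟨fun ⟨e⟩ => e.length_eq.trans (length_fin_pi m), fun hm => ?_⟩
  obtain ⟨n, ⟨e⟩⟩ := h.linearEquiv_fun
  rw [e.length_eq, length_fin_pi, Nat.cast_inj] at hm
  exact hm ▸ ⟨e⟩

section Correspondence

variable [IsSemisimpleModule R M] [Module.Finite R M] [IsSemisimpleModule R N]
  (hM : IsIsotypicOfType R M V) (hN : IsIsotypicOfType R N V) (f : M →ₗ[R] N)
  {n₁ n₂ : ℕ} (hker : length R (ker f) = n₁) (h12 : n₁ ≤ n₂)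
include hM hN hker h12

theorem LinearMap.nonempty_linearEquiv_fin_pi_map_iff {C : Submodule R M} (hC : ker f ≤ C) :
    Nonempty (C ≃ₗ[R] (Fin n₂ → V)) ↔ Nonempty (C.map f ≃ₗ[R] (Fin (n₂ - n₁) → V)) := by
  rw [(hM.of_injective _ C.injective_subtype).nonempty_linearEquiv_fin_pi_iff,
    (hN.of_injective _ (C.map f).injective_subtype).nonempty_linearEquiv_fin_pi_iff,
    length_eq_length_ker_add_length_map f hC, hker, ENat.natCast_add_eq_natCast_iff,
    and_iff_right h12]

def LinearMap.finPiSubmoduleEquivOfSurjective (hf : Function.Surjective f) :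
    {C : Submodule R M // Nonempty (C ≃ₗ[R] (Fin n₂ → V)) ∧ ker f ≤ C} ≃
      {D : Submodule R N // Nonempty (D ≃ₗ[R] (Fin (n₂ - n₁) → V))} where
  toFun C := ⟨C.1.map f, (nonempty_linearEquiv_fin_pi_map_iff hM hN f hker h12 C.2.2).mp C.2.1⟩
  invFun D :=
    have hD : ker f ≤ D.1.comap f := Submodule.comap_mono bot_le
    ⟨D.1.comap f, (nonempty_linearEquiv_fin_pi_map_iff hM hN f hker h12 hD).mpr
      (by rw [Submodule.map_comap_eq_of_surjective hf]; exact D.2), hD⟩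
  left_inv C := Subtype.ext (Submodule.comap_map_eq_self C.2.2)
  right_inv D := Subtype.ext (Submodule.map_comap_eq_of_surjective hf D.1)

end Correspondence

end

theorem stmt2_general (R : Type*) [Ring R]
    (V : Type*) [AddCommGroup V] [Module R V]
    [IsSimpleModule R V]
    (n₁ n₂ n₃ : ℕ) (h12 : n₁ ≤ n₂)
    (u : Fin n₃ → V)
    (hu : Nonempty ((Submodule.span R {u}) ≃ₗ[R] (Fin n₁ → V))) :
    Nonempty
      ({C : Submodule R (Fin n₃ → V) // Nonempty (C ≃ₗ[R] (Fin n₂ → V)) ∧ u ∈ C} ≃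
       {C : Submodule R (Fin (n₃ - n₁) → V) // Nonempty (C ≃ₗ[R] (Fin (n₂ - n₁) → V))}) := by
  set W := Submodule.span R {u}
  have hW : length R W = n₁ := hu.some.length_eq.trans (length_fin_pi n₁)
  obtain ⟨W', hWW'⟩ := exists_isCompl W
  have hW' : Nonempty (W' ≃ₗ[R] (Fin (n₃ - n₁) → V)) := by
    have hlen := (Submodule.prodEquivOfIsCompl W W' hWW').length_eq
    rw [length_prod, hW, length_fin_pi, ENat.natCast_add_eq_natCast_iff] at hlen
    exact ((isIsotypicOfType_pi _).of_injective _ W'.injective_subtype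
      |>.nonempty_linearEquiv_fin_pi_iff _).mpr hlen.2
  let f := hW'.some.toLinearMap ∘ₗ W'.projectionOnto W hWW'.symm
  have hker : ker f = W := by
    rw [ker_comp, LinearEquiv.ker, Submodule.comap_bot, Submodule.ker_projectionOnto]
  have hf : Function.Surjective f :=
    hW'.some.surjective.comp (Submodule.projectionOnto_surjective _)
  refine ⟨(Equiv.subtypeEquivRight fun C => ?_).trans
    (f.finPiSubmoduleEquivOfSurjective (isIsotypicOfType_pi _) (isIsotypicOfType_pi _)
      (hker ▸ hW) h12 hf)⟩
  rw [hker, Submodule.span_singleton_le_iff_mem]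

/-- Let `k` be a field, `R` a finite-dimensional semisimple `k`-algebra, `V` a simple
finite-dimensional left `R`-module, and `n₁ ≤ n₂ ≤ n₃`. Let
`U = {v ∈ V^{n₃} : R·v ≅ V^{n₁}}` and `C(a,b)` the set of `R`-submodules of `V^{b}`
isomorphic to `V^{a}`. Then for each `u ∈ U` there is a bijection between
`{C ∈ C(n₂,n₃) : u ∈ C}` and `C(n₂−n₁, n₃−n₁)`. -/
theorem stmt2 (k : Type*) [Field k] (R : Type*) [Ring R] [Algebra k R]
    [FiniteDimensional k R] [IsSemisimpleRing R]
    (V : Type*) [AddCommGroup V] [Module R V] [Module k V] [IsScalarTower k R V]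
    [IsSimpleModule R V] [FiniteDimensional k V]
    (n₁ n₂ n₃ : ℕ) (h12 : n₁ ≤ n₂) (h23 : n₂ ≤ n₃)
    (u : Fin n₃ → V)
    (hu : Nonempty ((Submodule.span R {u}) ≃ₗ[R] (Fin n₁ → V))) :
    Nonempty
      ({C : Submodule R (Fin n₃ → V) // Nonempty (C ≃ₗ[R] (Fin n₂ → V)) ∧ u ∈ C} ≃
       {C : Submodule R (Fin (n₃ - n₁) → V) // Nonempty (C ≃ₗ[R] (Fin (n₂ - n₁) → V))}) :=
  stmt2_general R V n₁ n₂ n₃ h12 u hu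
end

section
/- Let A be a central simple division algebra over a number field K with maximal O_K-order O viewed as a lattice in A_R = A ⊗_Q R via a quadratic form q_a(x) = Tr(x*ax) for a symmetric positive definite a. Then the shortest vector length satisfies λ₁(O) ≥ √([A:Q]) · N(a)^{1/(2[A:Q])}. -/
/-!
Positivity of the involution makes `⟪z, w⟫ = Tr(L_{z* w}) + Tr(L_{w* z})` an inner product on
`A_ℝ` for which `L_b` is a positive operator whenever `b = b*` and `Tr(L_{z* b z}) ≥ 0` for all
`z`. For `b = x* a x`, AM-GM on the eigenvalues of `L_b` gives `q_a(x) ≥ n · det(L_b)^{1/n}` with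
`n = [A:ℚ]`. As `det L_{x*} = det R_x`, we have `det L_b = det R_x · det L_x · N(a)`, and
`det R_x · det L_x = det L_{x* x}` is a nonnegative integer (multiplication by `x` preserves the
lattice `O`) which is nonzero (`x` is invertible), hence at least `1`.
-/

open Module Submodule LinearMap
open scoped NumberField TensorProduct

section InnerProductSpace

variable {E : Type*} [NormedAddCommGroup E] [InnerProductSpace ℝ E] [FiniteDimensional ℝ E]
  {T : E →ₗ[ℝ] E}

theorem LinearMap.IsPositive.det_nonneg (hT : T.IsPositive) : 0 ≤ T.det := by
  rw [hT.isSymmetric.det_eq_prod_eigenvalues rfl]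
  exact Finset.prod_nonneg fun i _ => by exact_mod_cast hT.nonneg_eigenvalues rfl i

theorem LinearMap.IsPositive.finrank_mul_det_rpow_le_trace (hT : T.IsPositive) :
    finrank ℝ E * T.det ^ (finrank ℝ E : ℝ)⁻¹ ≤ trace ℝ E T := by
  obtain ⟨n, hn⟩ : ∃ n, finrank ℝ E = n := ⟨_, rfl⟩
  set μ := hT.isSymmetric.eigenvalues hn
  rw [hT.isSymmetric.det_eq_prod_eigenvalues hn, hT.isSymmetric.trace_eq_sum_eigenvalues hn, hn]
  simp only [RCLike.ofReal_real_eq_id, id_eq]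
  rcases Nat.eq_zero_or_pos n with rfl | hn₀
  · simp
  have amgm := Real.geom_mean_le_arith_mean Finset.univ (fun _ => (1 : ℝ)) μ
    (fun _ _ => zero_le_one) (by simpa using hn₀) (fun i _ => hT.nonneg_eigenvalues hn i)
  simp only [Real.rpow_one, one_mul, Finset.sum_const, Finset.card_univ, Fintype.card_fin,
    nsmul_eq_mul, mul_one] at amgm
  rwa [le_div_iff₀ (by positivity), mul_comm] at amgm

end InnerProductSpace

section StarTrace

variable {B : Type*} [Ring B] [StarRing B] [Algebra ℝ B] [StarModule ℝ B]

noncomputable def mulLeftTrace : B →ₗ[ℝ] ℝ := trace ℝ B ∘ₗ (Algebra.lmul ℝ B).toLinearMap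

noncomputable abbrev starTraceCore (hpos : ∀ z : B, z ≠ 0 → 0 < mulLeftTrace (star z * z)) :
    InnerProductSpace.Core ℝ B where
  inner z w := mulLeftTrace (star z * w) + mulLeftTrace (star w * z)
  conj_inner_symm z w := add_comm _ _
  re_inner_nonneg z := by
    rcases eq_or_ne z 0 with rfl | hz
    · simp
    · exact (add_pos (hpos z hz) (hpos z hz)).le
  add_left u v w := by simp only [star_add, add_mul, mul_add, map_add]; ring
  smul_left u v r := by
    simp only [star_smul, star_trivial, smul_mul_assoc, mul_smul_comm, map_smul, smul_eq_mul,
      conj_trivial]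
    ring
  definite z hz := by
    by_contra hz₀
    change mulLeftTrace (star z * z) + mulLeftTrace (star z * z) = 0 at hz
    linarith [hpos z hz₀]

theorem isPositive_mulLeft (hpos : ∀ z : B, z ≠ 0 → 0 < mulLeftTrace (star z * z)) {a : B}
    (ha : IsSelfAdjoint a) (hapos : ∀ z : B, 0 ≤ mulLeftTrace (star z * a * z)) :
    letI := (starTraceCore hpos).toNormedAddCommGroup
    letI := InnerProductSpace.ofCore (starTraceCore hpos).toCore
    (mulLeft ℝ a).IsPositive := by
  let := (starTraceCore hpos).toNormedAddCommGroup
  let := InnerProductSpace.ofCore (starTraceCore hpos).toCore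
  have hstar : ∀ z w : B, star (a * z) * w = star z * a * w := fun z w => by
    rw [star_mul, ha.star_eq, mul_assoc]
  refine ⟨fun z w => ?_, fun z => ?_⟩
  · change mulLeftTrace (star (a * z) * w) + mulLeftTrace (star w * (a * z)) =
      mulLeftTrace (star z * (a * w)) + mulLeftTrace (star (a * w) * z)
    simp only [hstar, mul_assoc]
  · change 0 ≤ mulLeftTrace (star (a * z) * z) + mulLeftTrace (star z * (a * z))
    rw [hstar, ← mul_assoc]
    exact add_nonneg (hapos z) (hapos z)

variable [FiniteDimensional ℝ B]

theorem det_mulLeft_nonneg (hpos : ∀ z : B, z ≠ 0 → 0 < mulLeftTrace (star z * z)) {a : B}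
    (ha : IsSelfAdjoint a) (hapos : ∀ z : B, 0 ≤ mulLeftTrace (star z * a * z)) :
    0 ≤ LinearMap.det (mulLeft ℝ a) :=
  let := (starTraceCore hpos).toNormedAddCommGroup
  let := InnerProductSpace.ofCore (starTraceCore hpos).toCore
  (isPositive_mulLeft hpos ha hapos).det_nonneg

theorem finrank_mul_det_mulLeft_rpow_le_mulLeftTrace
    (hpos : ∀ z : B, z ≠ 0 → 0 < mulLeftTrace (star z * z)) {a : B}
    (ha : IsSelfAdjoint a) (hapos : ∀ z : B, 0 ≤ mulLeftTrace (star z * a * z)) :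
    finrank ℝ B * LinearMap.det (mulLeft ℝ a) ^ (finrank ℝ B : ℝ)⁻¹ ≤ mulLeftTrace a :=
  let := (starTraceCore hpos).toNormedAddCommGroup
  let := InnerProductSpace.ofCore (starTraceCore hpos).toCore
  (isPositive_mulLeft hpos ha hapos).finrank_mul_det_rpow_le_trace

theorem one_le_det_mulLeft_star_mul_self
    (hpos : ∀ z : B, z ≠ 0 → 0 < mulLeftTrace (star z * z)) {x : B} (hx : IsUnit x)
    (hint : ∃ m : ℤ, LinearMap.det (mulLeft ℝ (star x * x)) = m) :
    1 ≤ LinearMap.det (mulLeft ℝ (star x * x)) := by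
  obtain ⟨m, hm⟩ := hint
  have hm₀ : (m : ℝ) ≠ 0 :=
    hm ▸ (isUnit_det _ (Algebra.lmul_isUnit_iff.mpr (hx.star.mul hx))).ne_zero
  have hm_nonneg : (0 : ℝ) ≤ m := hm ▸ det_mulLeft_nonneg hpos (.star_mul_self x) fun z => by
    rcases eq_or_ne (x * z) 0 with hxz | hxz
    · simp [← mul_assoc, mul_assoc _ x, hxz]
    · simpa only [star_mul, mul_assoc] using (hpos (x * z) hxz).le
  rw [hm]
  exact_mod_cast (show 0 < m by exact_mod_cast hm_nonneg.lt_of_ne' hm₀)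

end StarTrace

theorem mulLeftTrace_star_conj_nonneg {B : Type*} [Ring B] [StarRing B] [Algebra ℝ B]
    {a : B} (hapos : ∀ z : B, 0 ≤ mulLeftTrace (star z * a * z)) (x z : B) :
    0 ≤ mulLeftTrace (star z * (star x * a * x) * z) := by
  simpa only [star_mul, mul_assoc] using hapos (x * z)

theorem LinearMap.det_mulLeft_star {R B : Type*} [CommRing R] [StarRing R] [TrivialStar R]
    [Ring B] [StarRing B] [Algebra R B] [StarModule R B] (x : B) :
    LinearMap.det (mulLeft R (star x)) = LinearMap.det (mulRight R x) := by
  let e : B ≃ₗ[R] B :=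
    { starAddEquiv with map_smul' := fun r y => by simp [star_smul, star_trivial] }
  rw [← det_conj (mulRight R x) e]
  congr 1
  ext y
  simp [e]

section BaseChange

variable {R S B : Type*} [CommRing R] [CommRing S] [Algebra R S] [Ring B] [Algebra R B]

theorem Algebra.TensorProduct.mulLeft_one_tmul (x : B) :
    mulLeft S ((1 : S) ⊗ₜ[R] x) = (mulLeft R x).baseChange S := by
  ext; simp

theorem Algebra.TensorProduct.mulRight_one_tmul (x : B) :
    mulRight S ((1 : S) ⊗ₜ[R] x) = (mulRight R x).baseChange S := by
  ext; simp

end BaseChange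

theorem IsLocalizedModule.of_span_range_eq_top {R K M V : Type*} [CommRing R] [CommRing K]
    [Algebra R K] (p : Submonoid R) [IsLocalization p K] [AddCommGroup M] [Module R M]
    [AddCommGroup V] [Module R V] [Module K V] [IsScalarTower R K V]
    {α : M →ₗ[R] V} (hα : Function.Injective α)
    (hspan : span K (Set.range α) = ⊤) : IsLocalizedModule p α where
  map_units := (isLocalizedModule_id p V K).map_units
  surj v := by
    have := isLocalizedModule_id p V K
    have hv : v ∈ (LinearMap.range α).localized' K p LinearMap.id := by
      rw [localized'_eq_span, LinearMap.id_coe, Set.image_id, LinearMap.coe_range, hspan]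
      trivial
    obtain ⟨_, ⟨m, rfl⟩, s, rfl⟩ := hv
    exact ⟨(m, s), IsLocalizedModule.mk'_cancel' _ _ _⟩
  exists_of_eq h := ⟨1, by simpa using hα h⟩

theorem LinearMap.det_eq_algebraMap_det_of_isBaseChange {R K M V : Type*} [CommRing R]
    [CommRing K] [Algebra R K] [AddCommGroup M] [Module R M] [Module.Free R M]
    [Module.Finite R M] [AddCommGroup V] [Module R V] [Module K V] [IsScalarTower R K V]
    {α : M →ₗ[R] V} (hα : IsBaseChange K α) {f : V →ₗ[K] V} {g : M →ₗ[R] M}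
    (hfg : ∀ m, f (α m) = α (g m)) : LinearMap.det f = algebraMap R K (LinearMap.det g) := by
  rw [← hα.det_endHom K M g]
  congr 1
  exact hα.algHom_ext _ _ fun m => by rw [hfg, IsBaseChange.endHom_comp_apply]

theorem LinearMap.exists_det_eq_intCast_of_mapsTo {V : Type*} [AddCommGroup V] [Module ℚ V]
    {L : Submodule ℤ V} [Module.Finite ℤ L] (hL : span ℚ (L : Set V) = ⊤) {f : V →ₗ[ℚ] V}
    (hf : ∀ v ∈ L, f v ∈ L) : ∃ m : ℤ, LinearMap.det f = m := by
  have := IsAddTorsionFree.of_module_rat V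
  have hloc : IsLocalizedModule (nonZeroDivisors ℤ) L.subtype :=
    .of_span_range_eq_top _ L.injective_subtype (by simpa using hL)
  exact ⟨_, det_eq_algebraMap_det_of_isBaseChange (hloc.isBaseChange _ ℚ _)
    (g := (f.restrictScalars ℤ).restrict hf) fun _ => rfl⟩

theorem exists_det_mulLeft_star_one_tmul_mul_self_eq_intCast {S A : Type*} [CommRing S]
    [StarRing S] [TrivialStar S] [Algebra ℚ S] [Ring A] [Algebra ℚ A] [FiniteDimensional ℚ A]
    [StarRing (S ⊗[ℚ] A)] [StarModule S (S ⊗[ℚ] A)] {L : Submodule ℤ A} [Module.Finite ℤ L]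
    (hL : span ℚ (L : Set A) = ⊤) {x : A} (hxL : ∀ y ∈ L, x * y ∈ L) (hLx : ∀ y ∈ L, y * x ∈ L) :
    ∃ m : ℤ, LinearMap.det (mulLeft S (star ((1 : S) ⊗ₜ[ℚ] x) * (1 ⊗ₜ[ℚ] x))) = (m : S) := by
  obtain ⟨m₁, h₁⟩ := exists_det_eq_intCast_of_mapsTo hL (f := mulLeft ℚ x) hxL
  obtain ⟨m₂, h₂⟩ := exists_det_eq_intCast_of_mapsTo hL (f := mulRight ℚ x) hLx
  refine ⟨m₂ * m₁, ?_⟩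
  rw [mulLeft_mul, det_comp, det_mulLeft_star, Algebra.TensorProduct.mulLeft_one_tmul,
    Algebra.TensorProduct.mulRight_one_tmul, det_baseChange, det_baseChange, h₁, h₂]
  simp

theorem NumberField.restrictScalars_span_eq_span_rat {K V : Type*} [Field K] [NumberField K]
    [AddCommGroup V] [Module K V] [Module ℚ V] [IsScalarTower ℚ K V] {S : Set V}
    (hS : ∀ c : 𝓞 K, ∀ y ∈ S, (c : K) • y ∈ S) :
    (span K S).restrictScalars ℚ = span ℚ S := by
  refine le_antisymm ?_ (span_le_restrictScalars ℚ K S)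
  let P : Submodule K V :=
    { span ℚ S with
      smul_mem' := fun c v (hv : v ∈ span ℚ S) => show c • v ∈ span ℚ S by
        obtain ⟨m, hm, hint⟩ := exists_integral_multiples ℤ ℚ {c}
        let d : 𝓞 K := ⟨m • c, hint c (Finset.mem_singleton_self c)⟩
        have hc : c = (m : ℚ)⁻¹ • (d : K) := by
          rw [show (d : K) = m • c from rfl, ← Int.cast_smul_eq_zsmul ℚ,
            inv_smul_smul₀ (Int.cast_ne_zero.mpr hm)]
        induction hv using span_induction with
        | mem y hy => rw [hc, smul_assoc]; exact smul_mem _ _ (subset_span (hS d y hy))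
        | zero => simp
        | add u w _ _ hu hw => rw [smul_add]; exact add_mem hu hw
        | smul q u _ hu => rw [smul_comm]; exact smul_mem _ q hu }
  exact (span_le (p := P)).mpr subset_span

theorem Real.sqrt_mul_rpow_inv {n d : ℝ} (hn : 0 ≤ n) (hd : 0 ≤ d) :
    √(n * d ^ n⁻¹) = √n * d ^ (1 / (2 * n)) := by
  rw [Real.sqrt_mul hn, Real.sqrt_eq_rpow (d ^ n⁻¹), ← Real.rpow_mul hd]
  congr 2
  ring

theorem stmt8_general (K : Type*) [Field K] [NumberField K]
    (A : Type*) [DivisionRing A] [CharZero A] [Algebra K A]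
    [FiniteDimensional K A] [IsScalarTower ℚ K A]
    -- `O` is a maximal order in `A`:
    (O : Subring A)
    (hOstab : ∀ c : 𝓞 K, ∀ y ∈ O, algebraMap K A c * y ∈ O)
    (hOfin : Module.Finite ℤ O)
    (hOspan : Submodule.span K (O : Set A) = ⊤)
    -- positive involution on `A_ℝ = ℝ ⊗[ℚ] A` and symmetric positive definite `a`:
    [StarRing (ℝ ⊗[ℚ] A)] [StarModule ℝ (ℝ ⊗[ℚ] A)]
    (hpos : ∀ z : ℝ ⊗[ℚ] A, z ≠ 0 →
      0 < LinearMap.trace ℝ (ℝ ⊗[ℚ] A) (LinearMap.mulLeft ℝ (star z * z)))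
    (a : ℝ ⊗[ℚ] A) (ha : star a = a)
    (hapos : ∀ z : ℝ ⊗[ℚ] A, z ≠ 0 →
      0 < LinearMap.trace ℝ (ℝ ⊗[ℚ] A) (LinearMap.mulLeft ℝ (star z * a * z))) :
    ∀ x ∈ O, x ≠ 0 →
      Real.sqrt (LinearMap.trace ℝ (ℝ ⊗[ℚ] A) (LinearMap.mulLeft ℝ
          (star ((1 : ℝ) ⊗ₜ[ℚ] x) * a * ((1 : ℝ) ⊗ₜ[ℚ] x)))) ≥
        Real.sqrt (Module.finrank ℚ A) *
          (LinearMap.det (LinearMap.mulLeft ℝ a)) ^ (1 / (2 * (Module.finrank ℚ A : ℝ))) := by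
  intro x hx hx₀
  have : Module.Finite ℚ A := Module.Finite.trans K A
  let L : Submodule ℤ A := O.toAddSubgroup.toIntSubmodule
  have : Module.Finite ℤ L := hOfin
  have hL : span ℚ (L : Set A) = ⊤ := by
    rw [← NumberField.restrictScalars_span_eq_span_rat (K := K) fun c y hy => by
      rw [Algebra.smul_def]; exact hOstab c y hy]
    exact (congrArg _ hOspan).trans (restrictScalars_top ℚ K A)
  set xh : ℝ ⊗[ℚ] A := 1 ⊗ₜ[ℚ] x
  have hN : 1 ≤ LinearMap.det (mulLeft ℝ (star xh * xh)) :=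
    one_le_det_mulLeft_star_mul_self hpos
      ((isUnit_iff_ne_zero.mpr hx₀).map Algebra.TensorProduct.includeRight)
      (exists_det_mulLeft_star_one_tmul_mul_self_eq_intCast hL (fun _ => O.mul_mem hx)
        fun _ hy => O.mul_mem hy hx)
  have hapos' : ∀ z : ℝ ⊗[ℚ] A, 0 ≤ mulLeftTrace (star z * a * z) := fun z =>
    (eq_or_ne z 0).elim (fun hz => by simp [hz]) fun hz => (hapos z hz).le
  have hdet_a := det_mulLeft_nonneg hpos ha hapos'
  have hdet : LinearMap.det (mulLeft ℝ a) ≤ LinearMap.det (mulLeft ℝ (star xh * a * xh)) := by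
    have : LinearMap.det (mulLeft ℝ (star xh * a * xh)) =
        LinearMap.det (mulLeft ℝ (star xh * xh)) * LinearMap.det (mulLeft ℝ a) := by
      simp only [mulLeft_mul, det_comp]; ring
    exact this ▸ le_mul_of_one_le_left hdet_a hN
  have hamgm := finrank_mul_det_mulLeft_rpow_le_mulLeftTrace hpos
    (IsSelfAdjoint.conjugate' ha xh) (mulLeftTrace_star_conj_nonneg hapos' xh)
  rw [finrank_baseChange] at hamgm
  rw [ge_iff_le, ← Real.sqrt_mul_rpow_inv (Nat.cast_nonneg _) hdet_a]
  exact Real.sqrt_le_sqrt (le_trans (by gcongr) hamgm)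

/-- **Lower bound for the shortest vector of a maximal order.**
Let `A` be a central simple division algebra over a number field `K`, with maximal order `O`
viewed as a lattice in `A_ℝ = ℝ ⊗_ℚ A` via the quadratic form `q_a(x) = Tr(x* a x)` for a
symmetric positive definite `a`. Then the shortest vector length satisfies
`λ₁(O) ≥ √[A:ℚ] · N(a)^(1/(2[A:ℚ]))`, i.e. every nonzero `x ∈ O` satisfies this bound. -/
theorem stmt8 (K : Type*) [Field K] [NumberField K]
    (A : Type*) [DivisionRing A] [CharZero A] [Algebra K A] [Algebra.IsCentral K A]
    [FiniteDimensional K A] [IsScalarTower ℚ K A]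
    -- `O` is a maximal order in `A`:
    (O : Subring A)
    (hOstab : ∀ c : 𝓞 K, ∀ y ∈ O, algebraMap K A c * y ∈ O)
    (hOfin : Module.Finite ℤ O)
    (hOspan : Submodule.span K (O : Set A) = ⊤)
    (hOmax : ∀ O' : Subring A, (∀ c : 𝓞 K, ∀ y ∈ O', algebraMap K A c * y ∈ O') →
      Module.Finite ℤ O' → Submodule.span K (O' : Set A) = ⊤ → O ≤ O' → O' = O)
    -- positive involution on `A_ℝ = ℝ ⊗[ℚ] A` and symmetric positive definite `a`:
    [StarRing (ℝ ⊗[ℚ] A)] [StarModule ℝ (ℝ ⊗[ℚ] A)]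
    (hpos : ∀ z : ℝ ⊗[ℚ] A, z ≠ 0 →
      0 < LinearMap.trace ℝ (ℝ ⊗[ℚ] A) (LinearMap.mulLeft ℝ (star z * z)))
    (a : ℝ ⊗[ℚ] A) (ha : star a = a)
    (hapos : ∀ z : ℝ ⊗[ℚ] A, z ≠ 0 →
      0 < LinearMap.trace ℝ (ℝ ⊗[ℚ] A) (LinearMap.mulLeft ℝ (star z * a * z))) :
    ∀ x ∈ O, x ≠ 0 →
      Real.sqrt (LinearMap.trace ℝ (ℝ ⊗[ℚ] A) (LinearMap.mulLeft ℝ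
          (star ((1 : ℝ) ⊗ₜ[ℚ] x) * a * ((1 : ℝ) ⊗ₜ[ℚ] x)))) ≥
        Real.sqrt (Module.finrank ℚ A) *
          (LinearMap.det (LinearMap.mulLeft ℝ a)) ^ (1 / (2 * (Module.finrank ℚ A : ℝ))) :=
  stmt8_general K A O hOstab hOfin hOspan hpos a ha hapos
end

section
/- Let A be a central simple division algebra over a number field K of total Q-dimension d = [A:Q], O a maximal order, and q_a(x) = Tr(x*ax) as above. For any two-sided O-ideal I (a full O_K-lattice in O), the Hermite parameter satisfies γ_{q_a}(I) ≥ d / d(O/Z)^{1/d}, where γ_{q_a}(I) = min_{x ∈ I, x ≠ 0} q_a(x) / det_{q_a}(I)^{1/d} and d(O/Z) is the discriminant of O over Z. -/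
/-!
Write `T u` for the trace of left multiplication on `A_ℝ = ℝ ⊗[ℚ] A` and put `c = x⋆ a x`, so
that `q_a(x) = T c`. Left multiplication `L_c` is self-adjoint and positive for the form
`T (y⋆ z)`, so AM-GM on its eigenvalues gives `q_a(x) ≥ d · (det L_c)^(1/d)`. The Gram matrix of
`q_c` in the basis `bO` has determinant `d(O/ℤ) · det L_c`; it is also the Gram matrix of `q_a` at
the vectors `x bO j ∈ I`, whose coordinates in `bI` are integers, so its determinant is
`N² det_{q_a}(I)` for a nonzero integer `N`. Hence `det L_c ≥ det_{q_a}(I) / d(O/ℤ)`.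
-/

open scoped Matrix

namespace Matrix

variable {n : Type*} [Fintype n]

theorem posDef_add_transpose_of_dotProduct_mulVec_pos {M : Matrix n n ℝ}
    (hM : ∀ v : n → ℝ, v ≠ 0 → 0 < v ⬝ᵥ (M *ᵥ v)) : (M + Mᵀ).PosDef := by
  refine PosDef.of_dotProduct_mulVec_pos ?_ fun v hv => ?_
  · simp [IsHermitian, conjTranspose_eq_transpose_of_trivial, add_comm]
  · have h := hM v hv
    have hT : v ⬝ᵥ (Mᵀ *ᵥ v) = v ⬝ᵥ (M *ᵥ v) := by
      rw [mulVec_transpose, dotProduct_comm, dotProduct_mulVec]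
    rw [star_trivial, add_mulVec, dotProduct_add, hT]
    linarith

variable [DecidableEq n]

theorem det_ne_zero_of_dotProduct_mulVec_pos {M : Matrix n n ℝ}
    (hM : ∀ v : n → ℝ, v ≠ 0 → 0 < v ⬝ᵥ (M *ᵥ v)) : M.det ≠ 0 := by
  intro h
  obtain ⟨v, hv, hMv⟩ := exists_mulVec_eq_zero_iff.mpr h
  simpa [hMv] using hM v hv

/-- Along the segment from `1` to `M` the quadratic form stays positive, so the determinant
never vanishes. -/
theorem det_pos_of_dotProduct_mulVec_pos {M : Matrix n n ℝ}
    (hM : ∀ v : n → ℝ, v ≠ 0 → 0 < v ⬝ᵥ (M *ᵥ v)) : 0 < M.det := by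
  set path : ℝ → Matrix n n ℝ := fun t => (1 - t) • (1 : Matrix n n ℝ) + t • M
  have hpath : ∀ t ∈ Set.Icc (0 : ℝ) 1, (path t).det ≠ 0 := by
    rintro t ⟨ht0, ht1⟩
    refine det_ne_zero_of_dotProduct_mulVec_pos fun v hv => ?_
    have hvv : 0 < v ⬝ᵥ v := dotProduct_self_star_pos_iff.mpr hv
    have : v ⬝ᵥ (path t *ᵥ v) = (1 - t) * (v ⬝ᵥ v) + t * (v ⬝ᵥ (M *ᵥ v)) := by
      simp [path, add_mulVec, smul_mulVec, dotProduct_add, dotProduct_smul]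
    rcases ht1.lt_or_eq with hlt | rfl
    · nlinarith [hM v hv]
    · simpa [path] using hM v hv
  by_contra! hle
  have hcont : Continuous fun t => (path t).det := by fun_prop
  obtain ⟨t, ht, h0⟩ := intermediate_value_Icc' zero_le_one hcont.continuousOn
    (show (0 : ℝ) ∈ Set.Icc (path 1).det (path 0).det by simpa [path] using hle)
  exact hpath t ht h0

theorem PosSemidef.card_mul_det_rpow_le_trace {H : Matrix n n ℝ} (hH : H.PosSemidef) :
    (Fintype.card n : ℝ) * H.det ^ (1 / (Fintype.card n : ℝ)) ≤ H.trace := by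
  rcases isEmpty_or_nonempty n with _ | _
  · simp
  have hcard : (0 : ℝ) < Fintype.card n := by exact_mod_cast Fintype.card_pos
  have amgm := Real.geom_mean_le_arith_mean Finset.univ (fun _ => (1 : ℝ))
    hH.isHermitian.eigenvalues (fun _ _ => zero_le_one) (by simpa using hcard)
    (fun i _ => hH.eigenvalues_nonneg i)
  simp only [Real.rpow_one, Finset.sum_const, Finset.card_univ, nsmul_eq_mul, mul_one,
    one_mul] at amgm
  rw [hH.isHermitian.det_eq_prod_eigenvalues, hH.isHermitian.trace_eq_sum_eigenvalues]
  simp only [RCLike.ofReal_real_eq_id, id, one_div]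
  rw [le_div_iff₀ hcard] at amgm
  linarith

/-- `M` is similar to the positive semidefinite `R W⁻¹ R`, where `R² = W M`. -/
theorem card_mul_det_rpow_le_trace_of_posDef_mul {W M : Matrix n n ℝ} (hW : W.PosDef)
    (hWM : (W * M).PosDef) :
    (Fintype.card n : ℝ) * M.det ^ (1 / (Fintype.card n : ℝ)) ≤ M.trace := by
  open scoped MatrixOrder in
  obtain ⟨R, hRR, hR⟩ : ∃ R : Matrix n n ℝ, R * R = W * M ∧ Rᴴ = R :=
    ⟨CFC.sqrt (W * M), CFC.sqrt_mul_sqrt_self _ hWM.posSemidef.nonneg,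
      (nonneg_iff_posSemidef.mp (CFC.sqrt_nonneg (W * M))).isHermitian⟩
  have hWunit : IsUnit W.det := hW.det_pos.ne'.isUnit
  have hM : M = W⁻¹ * (R * R) := by rw [hRR, nonsing_inv_mul_cancel_left _ _ hWunit]
  have hH : (R * W⁻¹ * R).PosSemidef := by
    have := hW.inv.posSemidef.mul_mul_conjTranspose_same R
    rwa [hR] at this
  have htr : M.trace = (R * W⁻¹ * R).trace := by
    rw [hM, ← Matrix.mul_assoc, trace_mul_comm (W⁻¹ * R) R, ← Matrix.mul_assoc]
  have hdet : M.det = (R * W⁻¹ * R).det := by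
    rw [hM]
    simp only [det_mul]
    ring
  rw [htr, hdet]
  exact hH.card_mul_det_rpow_le_trace

theorem card_mul_det_rpow_le_trace_of_mul_eq_transpose_mul {W M : Matrix n n ℝ}
    (hWM : W * M = Mᵀ * W) (hW : ∀ v : n → ℝ, v ≠ 0 → 0 < v ⬝ᵥ (W *ᵥ v))
    (hWMpos : ∀ v : n → ℝ, v ≠ 0 → 0 < v ⬝ᵥ ((W * M) *ᵥ v)) :
    (Fintype.card n : ℝ) * M.det ^ (1 / (Fintype.card n : ℝ)) ≤ M.trace := by
  -- `W + Wᵀ` is positive definite, and `(W + Wᵀ) M = W M + (W M)ᵀ` since `W M = Mᵀ W`.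
  have hsym : (W + Wᵀ) * M = W * M + (W * M)ᵀ := by
    rw [add_mul, transpose_mul, ← transpose_transpose (Wᵀ * M), transpose_mul, transpose_transpose,
      ← hWM, transpose_mul]
  refine card_mul_det_rpow_le_trace_of_posDef_mul
    (posDef_add_transpose_of_dotProduct_mulVec_pos hW) ?_
  rw [hsym]
  exact posDef_add_transpose_of_dotProduct_mulVec_pos hWMpos

end Matrix

open Module LinearMap

section PosBilinForm

variable {M ι : Type*} [AddCommGroup M] [Module ℝ M] [Fintype ι] [DecidableEq ι]
  {Bf : LinearMap.BilinForm ℝ M}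

theorem LinearMap.BilinForm.dotProduct_toMatrix₂_mulVec_pos
    (hBf : ∀ z : M, z ≠ 0 → 0 < Bf z z) (e : Basis ι ℝ M) {v : ι → ℝ} (hv : v ≠ 0) :
    0 < v ⬝ᵥ (toMatrix₂ e e Bf *ᵥ v) := by
  have h := dotProduct_toMatrix₂_mulVec e e Bf v v
  rw [RingHom.coe_id, Function.id_comp] at h
  rw [h]
  exact hBf _ (e.equivFun.symm.map_ne_zero_iff.mpr hv)

theorem LinearMap.BilinForm.det_toMatrix₂_pos (hBf : ∀ z : M, z ≠ 0 → 0 < Bf z z)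
    (e : Basis ι ℝ M) : 0 < (toMatrix₂ e e Bf).det :=
  Matrix.det_pos_of_dotProduct_mulVec_pos fun _ hv => dotProduct_toMatrix₂_mulVec_pos hBf e hv

end PosBilinForm

theorem LinearMap.det_toMatrix_mem_range_of_mem_span {R S V ι : Type*} [CommRing R] [IsDomain R]
    [CommRing S] [Nontrivial S] [Algebra R S] [IsTorsionFree R S] [AddCommGroup V] [Module R V]
    [Module S V] [IsScalarTower R S V] [Fintype ι] [DecidableEq ι] (b c : Basis ι S V)
    (f : V →ₗ[S] V) (hf : ∀ j, f (b j) ∈ Submodule.span R (Set.range c)) :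
    (toMatrix b c f).det ∈ (algebraMap R S).range := by
  choose N hN using fun i j => (c.mem_span_iff_repr_mem R _).mp (hf j) i
  refine ⟨(Matrix.of N).det, ?_⟩
  rw [RingHom.map_det]
  congr 1
  ext i j
  simp [hN, toMatrix_apply]

theorem LinearMap.det_toMatrix_baseChange {R L M ι : Type*} [CommRing R] [CommRing L]
    [Algebra R L] [AddCommGroup M] [Module R M] [Fintype ι] [DecidableEq ι] (b c : Basis ι R M)
    (f : M →ₗ[R] M) :
    (toMatrix (Algebra.TensorProduct.basis L b) (Algebra.TensorProduct.basis L c)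
      (f.baseChange L)).det = algebraMap R L (toMatrix b c f).det := by
  rw [toMatrix_baseChange, RingHom.map_det, RingHom.mapMatrix_apply]

section StarTraceForm

variable {B : Type*} [Ring B] [Algebra ℝ B] [StarRing B] [StarModule ℝ B]

/-- The polarization of the paper's `q_c(y) = Tr(y⋆ c y)`. -/
noncomputable def starTraceForm (c : B) : LinearMap.BilinForm ℝ B :=
  LinearMap.mk₂ ℝ (fun y z => (trace ℝ B ∘ₗ mul ℝ B) (star y * c * z))
    (fun _ _ _ => by simp only [star_add, add_mul, map_add])
    (fun _ _ _ => by simp only [star_smul, star_trivial, smul_mul_assoc, map_smul, smul_eq_mul])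
    (fun _ _ _ => by simp only [mul_add, map_add])
    (fun _ _ _ => by simp only [mul_smul_comm, map_smul, smul_eq_mul])

@[simp]
theorem starTraceForm_apply (c y z : B) :
    starTraceForm c y z = trace ℝ B (mulLeft ℝ (star y * c * z)) := rfl

theorem starTraceForm_star_mul_mul (u c : B) :
    starTraceForm (star u * c * u) = (starTraceForm c).compl₁₂ (mulLeft ℝ u) (mulLeft ℝ u) := by
  ext y z
  simp only [starTraceForm_apply, compl₁₂_apply, mulLeft_apply, star_mul, mul_assoc]

theorem starTraceForm_eq_compl₂ (c : B) :
    starTraceForm c = (starTraceForm 1).compl₂ (mulLeft ℝ c) := by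
  ext y z
  simp only [starTraceForm_apply, compl₂_apply, mulLeft_apply, mul_one, mul_assoc]

theorem starTraceForm_one_comp_mulLeft {c : B} (hc : star c = c) :
    LinearMap.comp (starTraceForm 1) (mulLeft ℝ c) = (starTraceForm 1).compl₂ (mulLeft ℝ c) := by
  ext y z
  simp only [LinearMap.comp_apply, starTraceForm_apply, compl₂_apply, mulLeft_apply, mul_one,
    star_mul, hc, mul_assoc]

theorem det_toMatrix₂_starTraceForm {ι : Type*} [Fintype ι] [DecidableEq ι] (e : Basis ι ℝ B)
    (c : B) :
    (toMatrix₂ e e (starTraceForm c)).det =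
      (toMatrix₂ e e (starTraceForm 1)).det * LinearMap.det (mulLeft ℝ c) := by
  rw [starTraceForm_eq_compl₂ c, toMatrix₂_compl₂ e e, Matrix.det_mul, det_toMatrix]

/-- `mulLeft ℝ c` is self-adjoint and positive for the (possibly non-symmetric) form
`starTraceForm 1`, so AM-GM applies to its eigenvalues. -/
theorem finrank_mul_det_mulLeft_rpow_le_trace [FiniteDimensional ℝ B]
    (hpos : ∀ z : B, z ≠ 0 → 0 < starTraceForm 1 z z) {c : B} (hc : star c = c)
    (hcpos : ∀ z : B, z ≠ 0 → 0 < starTraceForm c z z) :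
    (finrank ℝ B : ℝ) * LinearMap.det (mulLeft ℝ c) ^ (1 / (finrank ℝ B : ℝ)) ≤
      trace ℝ B (mulLeft ℝ c) := by
  let e := Module.finBasis ℝ B
  have hgram : toMatrix₂ e e (starTraceForm c) =
      toMatrix₂ e e (starTraceForm 1) * toMatrix e e (mulLeft ℝ c) := by
    rw [starTraceForm_eq_compl₂ c, toMatrix₂_compl₂ e e]
  have hsa : toMatrix₂ e e (starTraceForm 1) * toMatrix e e (mulLeft ℝ c) =
      (toMatrix e e (mulLeft ℝ c))ᵀ * toMatrix₂ e e (starTraceForm 1) := by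
    rw [← toMatrix₂_compl₂ e e, ← toMatrix₂_comp e e, starTraceForm_one_comp_mulLeft hc]
  have := Matrix.card_mul_det_rpow_le_trace_of_mul_eq_transpose_mul hsa
    (fun _ => BilinForm.dotProduct_toMatrix₂_mulVec_pos hpos e)
    (hgram ▸ fun _ => BilinForm.dotProduct_toMatrix₂_mulVec_pos hcpos e)
  rwa [Fintype.card_fin, det_toMatrix, ← trace_eq_matrix_trace] at this

theorem starTraceForm_star_mul_mul_self_pos {a u : B}
    (hapos : ∀ z : B, z ≠ 0 → 0 < starTraceForm a z z) (hu : IsUnit u) {z : B} (hz : z ≠ 0) :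
    0 < starTraceForm (star u * a * u) z z := by
  rw [starTraceForm_star_mul_mul]
  exact hapos _ (hu.mul_right_eq_zero.not.mpr hz)

variable {ι : Type*} [Fintype ι] [DecidableEq ι]

/-- The Gram matrix of `q_{u⋆au}` in `eO` is that of `q_a` at the vectors `u eO j`, which is
`Nᵀ G N` with `G` the Gram matrix of `q_a` in `eI` and `det N` a nonzero integer. -/
theorem det_toMatrix₂_starTraceForm_le {a u : B}
    (hapos : ∀ z : B, z ≠ 0 → 0 < starTraceForm a z z) (hu : IsUnit u) (eO eI : Basis ι ℝ B)
    (hint : (toMatrix eO eI (mulLeft ℝ u)).det ∈ (algebraMap ℤ ℝ).range) :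
    (toMatrix₂ eI eI (starTraceForm a)).det ≤
      (toMatrix₂ eO eO (starTraceForm 1)).det * LinearMap.det (mulLeft ℝ (star u * a * u)) := by
  obtain ⟨n, hn⟩ := hint
  have hgram : (toMatrix₂ eO eO (starTraceForm (star u * a * u))).det =
      (n : ℝ) ^ 2 * (toMatrix₂ eI eI (starTraceForm a)).det := by
    rw [starTraceForm_star_mul_mul, toMatrix₂_compl₁₂ eI eI, Matrix.det_mul, Matrix.det_mul,
      Matrix.det_transpose, ← hn, eq_intCast]
    ring
  have hgram_pos := BilinForm.det_toMatrix₂_pos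
    (fun _ => starTraceForm_star_mul_mul_self_pos hapos hu) eO
  have hn1 : (1 : ℝ) ≤ (n : ℝ) ^ 2 := by
    have hn0 : n ≠ 0 := by
      rintro rfl
      simp [hgram] at hgram_pos
    exact_mod_cast (one_le_sq_iff_one_le_abs n).mpr (Int.one_le_abs hn0)
  rw [← det_toMatrix₂_starTraceForm, hgram]
  nlinarith [BilinForm.det_toMatrix₂_pos hapos eI]

theorem card_div_det_rpow_le_trace_div_det_rpow [FiniteDimensional ℝ B] {a u : B}
    (hpos : ∀ z : B, z ≠ 0 → 0 < starTraceForm 1 z z) (ha : star a = a)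
    (hapos : ∀ z : B, z ≠ 0 → 0 < starTraceForm a z z) (hu : IsUnit u) (eO eI : Basis ι ℝ B)
    (hint : (toMatrix eO eI (mulLeft ℝ u)).det ∈ (algebraMap ℤ ℝ).range) :
    (Fintype.card ι : ℝ) / (toMatrix₂ eO eO (starTraceForm 1)).det ^ (1 / (Fintype.card ι : ℝ)) ≤
      trace ℝ B (mulLeft ℝ (star u * a * u)) /
        (toMatrix₂ eI eI (starTraceForm a)).det ^ (1 / (Fintype.card ι : ℝ)) := by
  set k : ℝ := (Fintype.card ι : ℝ)
  set GO := (toMatrix₂ eO eO (starTraceForm 1)).det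
  set GI := (toMatrix₂ eI eI (starTraceForm a)).det
  set L := LinearMap.det (mulLeft ℝ (star u * a * u))
  have hGO := BilinForm.det_toMatrix₂_pos hpos eO
  have hGI := BilinForm.det_toMatrix₂_pos hapos eI
  have hGI_le : GI ≤ GO * L := det_toMatrix₂_starTraceForm_le hapos hu eO eI hint
  have hL : 0 ≤ L := nonneg_of_mul_nonneg_right (hGI.le.trans hGI_le) hGO
  have hamgm : k * L ^ (1 / k) ≤ trace ℝ B (mulLeft ℝ (star u * a * u)) := by
    have h := finrank_mul_det_mulLeft_rpow_le_trace hpos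
      (by simp only [star_mul, star_star, ha, mul_assoc]) fun _ =>
        starTraceForm_star_mul_mul_self_pos hapos hu
    rwa [finrank_eq_card_basis eO] at h
  rw [div_le_div_iff₀ (by positivity) (by positivity)]
  calc k * GI ^ (1 / k) ≤ k * (GO * L) ^ (1 / k) := by gcongr
    _ = k * L ^ (1 / k) * GO ^ (1 / k) := by rw [Real.mul_rpow hGO.le hL]; ring
    _ ≤ _ := by gcongr

end StarTraceForm

open scoped TensorProduct

theorem det_toMatrix_mulLeft_tmul_mem_range {A ι : Type*} [Ring A] [Algebra ℚ A] [Fintype ι]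
    [DecidableEq ι] (b c : Basis ι ℚ A) {x : A}
    (hx : ∀ j, x * b j ∈ Submodule.span ℤ (Set.range c)) :
    (toMatrix (Algebra.TensorProduct.basis ℝ b) (Algebra.TensorProduct.basis ℝ c)
      (mulLeft ℝ ((1 : ℝ) ⊗ₜ[ℚ] x))).det ∈ (algebraMap ℤ ℝ).range := by
  obtain ⟨n, hn⟩ := det_toMatrix_mem_range_of_mem_span b c (mulLeft ℚ x) hx
  have hbc : mulLeft ℝ ((1 : ℝ) ⊗ₜ[ℚ] x) = (mulLeft ℚ x).baseChange ℝ :=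
    (Algebra.baseChange_lmul x).symm
  refine ⟨n, ?_⟩
  rw [hbc, det_toMatrix_baseChange, ← hn]
  simp

theorem toMatrix₂_starTraceForm_basis {A ι : Type*} [Ring A] [Algebra ℚ A]
    [StarRing (ℝ ⊗[ℚ] A)] [StarModule ℝ (ℝ ⊗[ℚ] A)] [Fintype ι] [DecidableEq ι]
    (b : Basis ι ℚ A) (c : ℝ ⊗[ℚ] A) :
    toMatrix₂ (Algebra.TensorProduct.basis ℝ b) (Algebra.TensorProduct.basis ℝ b)
      (starTraceForm c) = Matrix.of fun i j => trace ℝ (ℝ ⊗[ℚ] A)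
        (mulLeft ℝ (star ((1 : ℝ) ⊗ₜ[ℚ] b i) * c * ((1 : ℝ) ⊗ₜ[ℚ] b j))) := by
  ext i j
  rw [toMatrix₂_apply, Algebra.TensorProduct.basis_apply, Algebra.TensorProduct.basis_apply,
    starTraceForm_apply, Matrix.of_apply]

open scoped NumberField

theorem stmt9_general
    (A : Type*) [DivisionRing A] [CharZero A]
    (d : ℕ) (hd : Module.finrank ℚ A = d)
    -- `O` is a maximal order in `A`, with `ℤ`-basis `bO`:
    (O : Subring A)
    (bO : Fin d → A) (hbO : LinearIndependent ℤ bO)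
    (hbOspan : ∀ x : A, x ∈ O ↔ x ∈ Submodule.span ℤ (Set.range bO))
    -- positive involution on `A_ℝ = ℝ ⊗[ℚ] A` and symmetric positive definite `a`:
    [StarRing (ℝ ⊗[ℚ] A)] [StarModule ℝ (ℝ ⊗[ℚ] A)]
    (hpos : ∀ z : ℝ ⊗[ℚ] A, z ≠ 0 →
      0 < LinearMap.trace ℝ (ℝ ⊗[ℚ] A) (LinearMap.mulLeft ℝ (star z * z)))
    (a : ℝ ⊗[ℚ] A) (ha : star a = a)
    (hapos : ∀ z : ℝ ⊗[ℚ] A, z ≠ 0 →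
      0 < LinearMap.trace ℝ (ℝ ⊗[ℚ] A) (LinearMap.mulLeft ℝ (star z * a * z)))
    -- `I` is a two-sided `O`-ideal which is a full `ℤ`-lattice, with `ℤ`-basis `bI`:
    (I : Submodule ℤ A)
    (hI : ∀ r ∈ O, ∀ x ∈ I, r * x ∈ I ∧ x * r ∈ I)
    (bI : Fin d → A) (hbI : LinearIndependent ℤ bI)
    (hbIspan : Submodule.span ℤ (Set.range bI) = I) :
    ∀ x ∈ I, x ≠ 0 →
      LinearMap.trace ℝ (ℝ ⊗[ℚ] A) (LinearMap.mulLeft ℝ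
          (star ((1 : ℝ) ⊗ₜ[ℚ] x) * a * ((1 : ℝ) ⊗ₜ[ℚ] x))) /
        (Matrix.det (Matrix.of fun i j : Fin d =>
          LinearMap.trace ℝ (ℝ ⊗[ℚ] A) (LinearMap.mulLeft ℝ
            (star ((1 : ℝ) ⊗ₜ[ℚ] bI i) * a * ((1 : ℝ) ⊗ₜ[ℚ] bI j))))) ^ (1 / (d : ℝ)) ≥
      (d : ℝ) /
        (Matrix.det (Matrix.of fun i j : Fin d =>
          LinearMap.trace ℝ (ℝ ⊗[ℚ] A) (LinearMap.mulLeft ℝ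
            (star ((1 : ℝ) ⊗ₜ[ℚ] bO i) * ((1 : ℝ) ⊗ₜ[ℚ] bO j))))) ^ (1 / (d : ℝ)) := by
  intro x hxI hx0
  have hd0 : d ≠ 0 := by
    rintro rfl
    simp [← hbIspan] at hxI
    exact hx0 hxI
  have : Nonempty (Fin d) := ⟨⟨0, Nat.pos_of_ne_zero hd0⟩⟩
  have : Module.Finite ℚ A := Module.finite_of_finrank_pos (by omega)
  have hcard : Fintype.card (Fin d) = finrank ℚ A := by rw [Fintype.card_fin, hd]
  let bQO := basisOfLinearIndependentOfCardEqFinrank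
    ((LinearIndependent.iff_fractionRing ℤ ℚ).mp hbO) hcard
  let bQI := basisOfLinearIndependentOfCardEqFinrank
    ((LinearIndependent.iff_fractionRing ℤ ℚ).mp hbI) hcard
  have hint := det_toMatrix_mulLeft_tmul_mem_range bQO bQI (x := x) fun j => by
    simp only [bQO, bQI, coe_basisOfLinearIndependentOfCardEqFinrank, hbIspan]
    exact (hI _ ((hbOspan _).mpr (Submodule.subset_span ⟨j, rfl⟩)) x hxI).2
  have hx : IsUnit ((1 : ℝ) ⊗ₜ[ℚ] x) :=
    (IsUnit.mk0 x hx0).map (Algebra.TensorProduct.includeRight (R := ℚ) (A := ℝ))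
  have key := card_div_det_rpow_le_trace_div_det_rpow
    (fun z hz => by simpa only [starTraceForm_apply, mul_one] using hpos z hz) ha hapos hx _ _ hint
  simp only [toMatrix₂_starTraceForm_basis, mul_one, Fintype.card_fin, bQO, bQI,
    coe_basisOfLinearIndependentOfCardEqFinrank] at key
  exact key

/-- **Hermite parameter lower bound for two-sided ideals.**
Let `A` be a central simple division algebra over a number field `K` of total `ℚ`-dimension
`d = [A:ℚ]`, `O` a maximal order with `ℤ`-basis `bO`, and `q_a(x) = Tr(x* a x)` the quadratic
form on `A_ℝ = ℝ ⊗_ℚ A` for a symmetric positive definite `a`. For any two-sided `O`-ideal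
`I` (a full `ℤ`-lattice in `A` with `ℤ`-basis `bI`, stable under both-sided multiplication
by `O`), the Hermite parameter satisfies `γ_{q_a}(I) ≥ d / d(O/ℤ)^(1/d)`, i.e. for every
nonzero `x ∈ I`, `q_a(x) / det_{q_a}(I)^(1/d) ≥ d / d(O/ℤ)^(1/d)`, where `det_{q_a}(I)` is the
Gram determinant of `q_a` in the basis `bI`, and `d(O/ℤ)` is the Gram determinant of the trace
form in the basis `bO` (the discriminant of `O` over `ℤ`). -/
theorem stmt9 (K : Type*) [Field K] [NumberField K]
    (A : Type*) [DivisionRing A] [CharZero A] [Algebra K A] [Algebra.IsCentral K A]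
    [FiniteDimensional K A] [IsScalarTower ℚ K A]
    (d : ℕ) (hd : Module.finrank ℚ A = d)
    -- `O` is a maximal order in `A`, with `ℤ`-basis `bO`:
    (O : Subring A)
    (hOstab : ∀ c : 𝓞 K, ∀ y ∈ O, algebraMap K A c * y ∈ O)
    (hOfin : Module.Finite ℤ O)
    (hOspan : Submodule.span K (O : Set A) = ⊤)
    (hOmax : ∀ O' : Subring A, (∀ c : 𝓞 K, ∀ y ∈ O', algebraMap K A c * y ∈ O') →
      Module.Finite ℤ O' → Submodule.span K (O' : Set A) = ⊤ → O ≤ O' → O' = O)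
    (bO : Fin d → A) (hbO : LinearIndependent ℤ bO)
    (hbOspan : ∀ x : A, x ∈ O ↔ x ∈ Submodule.span ℤ (Set.range bO))
    -- positive involution on `A_ℝ = ℝ ⊗[ℚ] A` and symmetric positive definite `a`:
    [StarRing (ℝ ⊗[ℚ] A)] [StarModule ℝ (ℝ ⊗[ℚ] A)]
    (hpos : ∀ z : ℝ ⊗[ℚ] A, z ≠ 0 →
      0 < LinearMap.trace ℝ (ℝ ⊗[ℚ] A) (LinearMap.mulLeft ℝ (star z * z)))
    (a : ℝ ⊗[ℚ] A) (ha : star a = a)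
    (hapos : ∀ z : ℝ ⊗[ℚ] A, z ≠ 0 →
      0 < LinearMap.trace ℝ (ℝ ⊗[ℚ] A) (LinearMap.mulLeft ℝ (star z * a * z)))
    -- `I` is a two-sided `O`-ideal which is a full `ℤ`-lattice, with `ℤ`-basis `bI`:
    (I : Submodule ℤ A)
    (hI : ∀ r ∈ O, ∀ x ∈ I, r * x ∈ I ∧ x * r ∈ I)
    (bI : Fin d → A) (hbI : LinearIndependent ℤ bI)
    (hbIspan : Submodule.span ℤ (Set.range bI) = I) :
    ∀ x ∈ I, x ≠ 0 →
      LinearMap.trace ℝ (ℝ ⊗[ℚ] A) (LinearMap.mulLeft ℝ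
          (star ((1 : ℝ) ⊗ₜ[ℚ] x) * a * ((1 : ℝ) ⊗ₜ[ℚ] x))) /
        (Matrix.det (Matrix.of fun i j : Fin d =>
          LinearMap.trace ℝ (ℝ ⊗[ℚ] A) (LinearMap.mulLeft ℝ
            (star ((1 : ℝ) ⊗ₜ[ℚ] bI i) * a * ((1 : ℝ) ⊗ₜ[ℚ] bI j))))) ^ (1 / (d : ℝ)) ≥
      (d : ℝ) /
        (Matrix.det (Matrix.of fun i j : Fin d =>
          LinearMap.trace ℝ (ℝ ⊗[ℚ] A) (LinearMap.mulLeft ℝ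
            (star ((1 : ℝ) ⊗ₜ[ℚ] bO i) * ((1 : ℝ) ⊗ₜ[ℚ] bO j))))) ^ (1 / (d : ℝ)) :=
  stmt9_general A d hd O bO hbO hbOspan hpos a ha hapos I hI bI hbI hbIspan
end
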